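/- Under the ROBE-Z setup, let V_Z(x,y,n,m) denote the variance of the ROBE-Z inner-product estimator Ŝ(x,y) for x, y ∈ ℝⁿ with memory size m and block size Z, and let V_1 denote the corresponding variance with block size 1 (feature hashing). Then for all x, y ∈ ℝⁿ: V_Z(x,y,n,m) = V_1(x,y,n,m) − Σ_{i=0}^{n/Z − 1} V_1(x[Zi : Z(i+1)], y[Zi : Z(i+1)], Z, m), where x[a:b] denotes the slice of the vector x consisting of entries with indices a, a+1, …, b−1 (a vector in ℝ^Z). -/
import Mathlib


open Finset

noncomputable section

/-- Sign value of a Boolean: `true ↦ +1`, `false ↦ -1`. -/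
def sgn (b : Bool) : ℝ := if b then 1 else -1

/-- The block id of an index `i` is a valid index into `Fin (n / Z)`. -/
theorem blockLt {n Z : ℕ} (hdvd : Z ∣ n) (i : Fin n) : i.1 / Z < n / Z :=
  Nat.div_lt_div_of_lt_of_dvd hdvd i.isLt

/-- ROBE-Z location map: `idx i = (h (⌊i/Z⌋) + (i mod Z)) mod m`. -/
def idx (n m Z : ℕ) (hdvd : Z ∣ n) (h : Fin (n / Z) → Fin m) (i : Fin n) : ℕ :=
  ((h ⟨i.1 / Z, blockLt hdvd i⟩).1 + i.1 % Z) % m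

/-- The ROBE-Z inner-product estimator `Ŝ(x,y)`, as a function of the random
sample `ω = (h, g)` drawn from the (finite) product space. -/
def est (n m Z : ℕ) (hdvd : Z ∣ n) (x y : Fin n → ℝ)
    (ω : (Fin (n / Z) → Fin m) × (Fin n → Bool)) : ℝ :=
  ∑ j : Fin m,
    (∑ i : Fin n, x i * sgn (ω.2 i) * (if idx n m Z hdvd ω.1 i = j.1 then 1 else 0)) *
    (∑ i : Fin n, y i * sgn (ω.2 i) * (if idx n m Z hdvd ω.1 i = j.1 then 1 else 0))

/-- Expectation with respect to the uniform (product) measure on the finite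
sample space of pairs `(h, g)`. -/
def expec (n m Z : ℕ) (f : ((Fin (n / Z) → Fin m) × (Fin n → Bool)) → ℝ) : ℝ :=
  (∑ ω : (Fin (n / Z) → Fin m) × (Fin n → Bool), f ω) /
    (Fintype.card ((Fin (n / Z) → Fin m) × (Fin n → Bool)))

/-- Variance `V_Z(x,y,n,m)` of the ROBE-Z inner-product estimator. -/
def varZ (n m Z : ℕ) (hdvd : Z ∣ n) (x y : Fin n → ℝ) : ℝ :=
  expec n m Z (fun ω => (est n m Z hdvd x y ω) ^ 2) -
    (expec n m Z (est n m Z hdvd x y)) ^ 2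

/-- The feature-hashing (block size 1) inner-product estimator, with location
map `idx i = h i`. -/
def est1 (n m : ℕ) (x y : Fin n → ℝ)
    (ω : (Fin n → Fin m) × (Fin n → Bool)) : ℝ :=
  ∑ j : Fin m,
    (∑ i : Fin n, x i * sgn (ω.2 i) * (if ω.1 i = j then 1 else 0)) *
    (∑ i : Fin n, y i * sgn (ω.2 i) * (if ω.1 i = j then 1 else 0))

/-- Expectation for the feature-hashing sample space. -/
def expec1 (n m : ℕ) (f : ((Fin n → Fin m) × (Fin n → Bool)) → ℝ) : ℝ :=
  (∑ ω : (Fin n → Fin m) × (Fin n → Bool), f ω) /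
    (Fintype.card ((Fin n → Fin m) × (Fin n → Bool)))

/-- Variance `V_1(x,y,n,m)` of the feature-hashing estimator. -/
def var1 (n m : ℕ) (x y : Fin n → ℝ) : ℝ :=
  expec1 n m (fun ω => (est1 n m x y ω) ^ 2) - (expec1 n m (est1 n m x y)) ^ 2

/-- The slice `x[Z·b : Z·(b+1)]` of a vector `x ∈ ℝⁿ`, a vector in `ℝ^Z`. -/
def vecSlice (n Z : ℕ) (hdvd : Z ∣ n) (x : Fin n → ℝ) (b : Fin (n / Z)) :
    Fin Z → ℝ :=
  fun k => x ⟨Z * b.1 + k.1, by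
    have h1 : Z * b.1 + k.1 < Z * (n / Z) := by
      have hk := k.isLt
      have hb := b.isLt
      nlinarith
    rwa [Nat.mul_div_cancel' hdvd] at h1⟩

set_option linter.unusedSectionVars false


lemma sgn_mul_self (b : Bool) : sgn b * sgn b = 1 := by cases b <;> simp [sgn]

lemma sgn_not (b : Bool) : sgn (!b) = - sgn b := by cases b <;> simp [sgn]

lemma flip_inv {n : ℕ} (a : Fin n) :
    Function.Involutive (fun g : Fin n → Bool => Function.update g a (!g a)) := by
  intro g
  funext b
  by_cases hb : b = a
  · subst hb; simp
  · simp [Function.update_of_ne hb]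

/-- Flip involution: summing an odd function of `g a` gives 0. -/
lemma g_iso {n : ℕ} (a : Fin n) (F : (Fin n → Bool) → ℝ)
    (hF : ∀ g b, F (Function.update g a b) = F g) :
    ∑ g : Fin n → Bool, sgn (g a) * F g = 0 := by
  have e := (flip_inv a).toPerm _
  have h1 : ∑ g : Fin n → Bool, sgn (g a) * F g
      = ∑ g : Fin n → Bool, sgn (((flip_inv a).toPerm _) g a) * F (((flip_inv a).toPerm _) g) :=
    (Equiv.sum_comp ((flip_inv a).toPerm _) (fun g => sgn (g a) * F g)).symm
  have h2 : ∀ g : Fin n → Bool,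
      sgn (((flip_inv a).toPerm _) g a) * F (((flip_inv a).toPerm _) g) = -(sgn (g a) * F g) := by
    intro g
    have : ((flip_inv a).toPerm _) g = Function.update g a (!g a) := rfl
    rw [this, hF, Function.update_self, sgn_not]
    ring
  rw [Finset.sum_congr rfl (fun g _ => h2 g), Finset.sum_neg_distrib] at h1
  linarith

lemma g2 {n : ℕ} {i i' : Fin n} (hne : i ≠ i') :
    ∑ g : Fin n → Bool, sgn (g i) * sgn (g i') = 0 := by
  apply g_iso i (fun g => sgn (g i'))
  intro g b
  simp [Function.update_of_ne (Ne.symm hne)]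

lemma g_iso' {n : ℕ} (a : Fin n) (F G : (Fin n → Bool) → ℝ)
    (hF : ∀ g b, F (Function.update g a b) = F g)
    (hG : ∀ g, G g = sgn (g a) * F g) :
    ∑ g : Fin n → Bool, G g = 0 := by
  rw [Finset.sum_congr rfl (fun g _ => hG g)]
  exact g_iso a F hF

lemma g4 {n : ℕ} {i i' j j' : Fin n} (h1 : i ≠ i') (h2 : j ≠ j') :
    ∑ g : Fin n → Bool, sgn (g i) * sgn (g i') * sgn (g j) * sgn (g j')
      = if (i = j ∧ i' = j') ∨ (i = j' ∧ i' = j) then (2 : ℝ)^n else 0 := by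
  by_cases hij : i = j
  · by_cases hij' : i' = j'
    · subst hij; subst hij'
      rw [if_pos (Or.inl ⟨rfl, rfl⟩)]
      have : ∀ g : Fin n → Bool, sgn (g i) * sgn (g i') * sgn (g i) * sgn (g i') = 1 := by
        intro g
        have a := sgn_mul_self (g i); have b := sgn_mul_self (g i')
        nlinarith
      rw [Finset.sum_congr rfl (fun g _ => this g)]
      simp [Finset.card_univ, mul_comm]
    · -- i' occurs exactly once
      have hcond : ¬ ((i = j ∧ i' = j') ∨ (i = j' ∧ i' = j)) := by
        rintro (⟨_, h⟩ | ⟨ha, hb⟩)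
        · exact hij' h
        · exact h2 (hij.symm.trans ha)
      rw [if_neg hcond]
      subst hij
      have hi'j' : i' ≠ j' := hij'
      have hi'i : i' ≠ i := Ne.symm h1
      have hi'j : i' ≠ i := hi'i
      apply g_iso' i' (fun g => sgn (g i) * sgn (g i) * sgn (g j'))
      · intro g b
        simp [Function.update_of_ne (Ne.symm hi'i), Function.update_of_ne (Ne.symm hi'j')]
      · intro g; ring
  · by_cases hij' : i = j'
    · by_cases hi'j : i' = j
      · subst hij'; subst hi'j
        rw [if_pos (Or.inr ⟨rfl, rfl⟩)]
        have : ∀ g : Fin n → Bool, sgn (g i) * sgn (g i') * sgn (g i') * sgn (g i) = 1 := by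
          intro g
          have a := sgn_mul_self (g i); have b := sgn_mul_self (g i')
          nlinarith
        rw [Finset.sum_congr rfl (fun g _ => this g)]
        simp [Finset.card_univ, mul_comm]
      ·
        have hcond : ¬ ((i = j ∧ i' = j') ∨ (i = j' ∧ i' = j)) := by
          rintro (⟨ha, _⟩ | ⟨_, hb⟩)
          · exact hij ha
          · exact hi'j hb
        rw [if_neg hcond]
        subst hij'
        have hi'j' : i' ≠ i := Ne.symm h1
        have hi'jj : i' ≠ j := hi'j
        apply g_iso' i' (fun g => sgn (g i) * sgn (g j) * sgn (g i))
        · intro g b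
          simp [Function.update_of_ne h1, Function.update_of_ne (Ne.symm hi'j)]
        · intro g; ring
    · -- i occurs exactly once
      have hcond : ¬ ((i = j ∧ i' = j') ∨ (i = j' ∧ i' = j)) := by
        rintro (⟨ha, _⟩ | ⟨ha, _⟩)
        · exact hij ha
        · exact hij' ha
      rw [if_neg hcond]
      apply g_iso' i (fun g => sgn (g i') * sgn (g j) * sgn (g j'))
      · intro g b
        simp [Function.update_of_ne (Ne.symm h1), Function.update_of_ne (Ne.symm hij), Function.update_of_ne (Ne.symm hij')]
      · intro g; ring


lemma card_ne_sub {A : Type*} [Fintype A] [DecidableEq A] (a : A) :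
    Fintype.card { j // j ≠ a } = Fintype.card A - 1 := by
  simp [Fintype.card_subtype_compl]

/-- Sum over functions of a function of one evaluation. -/
lemma sum_fun_one {A : Type*} [Fintype A] [DecidableEq A] {B : Type*} [Fintype B]
    (a : A) (f : B → ℝ) :
    ∑ h : A → B, f (h a)
      = (Fintype.card B : ℝ) ^ (Fintype.card A - 1) * ∑ u : B, f u := by
  classical
  rw [Fintype.sum_equiv (Equiv.funSplitAt a B) (fun h => f (h a)) (fun p => f p.1)
    (fun h => rfl)]
  rw [Fintype.sum_prod_type]
  simp only [Finset.sum_const, Finset.card_univ, Fintype.card_fun, card_ne_sub, nsmul_eq_mul]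
  push_cast
  rw [← Finset.mul_sum]

/-- Sum over functions of a function of two evaluations. -/
lemma sum_fun_pair {A : Type*} [Fintype A] [DecidableEq A] {B : Type*} [Fintype B]
    (a b : A) (hab : a ≠ b) (f : B → B → ℝ) :
    ∑ h : A → B, f (h a) (h b)
      = (Fintype.card B : ℝ) ^ (Fintype.card A - 2) * ∑ u : B, ∑ v : B, f u v := by
  classical
  rw [Fintype.sum_equiv (Equiv.funSplitAt a B) (fun h => f (h a) (h b))
    (fun p => f p.1 (p.2 ⟨b, Ne.symm hab⟩)) (fun h => rfl)]
  rw [Fintype.sum_prod_type]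
  have inner : ∀ u : B, (∑ p2 : { j // j ≠ a } → B, f u (p2 ⟨b, Ne.symm hab⟩))
      = (Fintype.card B : ℝ) ^ (Fintype.card A - 2) * ∑ v : B, f u v := by
    intro u
    rw [sum_fun_one (⟨b, Ne.symm hab⟩ : { j // j ≠ a }) (fun v => f u v), card_ne_sub, Nat.sub_sub]
  rw [Finset.sum_congr rfl (fun u _ => inner u), ← Finset.mul_sum]

section General
variable {n : ℕ} {H : Type*} [Fintype H]

def wpair (x y : Fin n → ℝ) (i i' : Fin n) : ℝ := x i * y i' * (x i * y i' + x i' * y i)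

def Sgen (c : H → Fin n → Fin n → ℝ) (x y : Fin n → ℝ) (h : H) (g : Fin n → Bool) : ℝ :=
  ∑ i : Fin n, ∑ i' : Fin n, x i * y i' * sgn (g i) * sgn (g i') * c h i i'

def Tgen (c : H → Fin n → Fin n → ℝ) (x y : Fin n → ℝ) (h : H) (g : Fin n → Bool) : ℝ :=
  ∑ p ∈ (univ : Finset (Fin n)).offDiag,
    x p.1 * y p.2 * sgn (g p.1) * sgn (g p.2) * c h p.1 p.2

lemma Sgen_split (c : H → Fin n → Fin n → ℝ) (hdiag : ∀ h i, c h i i = 1)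
    (x y : Fin n → ℝ) (h : H) (g : Fin n → Bool) :
    Sgen c x y h g = (∑ i : Fin n, x i * y i) + Tgen c x y h g := by
  unfold Sgen Tgen
  rw [← Finset.sum_product']
  rw [← Finset.diag_union_offDiag (univ : Finset (Fin n))]
  rw [Finset.sum_union (Finset.disjoint_diag_offDiag _)]
  congr 1
  rw [Finset.sum_diag]
  apply Finset.sum_congr rfl
  intro i _
  rw [hdiag]
  show x i * y i * sgn (g i) * sgn (g i) * 1 = x i * y i
  have hss := sgn_mul_self (g i)
  linear_combination (x i * y i) * hss

lemma Tgen_mean (c : H → Fin n → Fin n → ℝ) (x y : Fin n → ℝ) (h : H) :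
    ∑ g : Fin n → Bool, Tgen c x y h g = 0 := by
  unfold Tgen
  rw [Finset.sum_comm]
  apply Finset.sum_eq_zero
  intro p hp
  have hne : p.1 ≠ p.2 := (Finset.mem_offDiag.mp hp).2.2
  have : ∀ g : Fin n → Bool,
      x p.1 * y p.2 * sgn (g p.1) * sgn (g p.2) * c h p.1 p.2
        = (x p.1 * y p.2 * c h p.1 p.2) * (sgn (g p.1) * sgn (g p.2)) := by
    intro g; ring
  rw [Finset.sum_congr rfl (fun g _ => this g), ← Finset.mul_sum, g2 hne, mul_zero]

lemma Tgen_sq (c : H → Fin n → Fin n → ℝ)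
    (hsymm : ∀ h i j, c h i j = c h j i)
    (hidem : ∀ h i j, c h i j * c h i j = c h i j)
    (x y : Fin n → ℝ) (h : H) :
    ∑ g : Fin n → Bool, (Tgen c x y h g)^2
      = (2:ℝ)^n * ∑ p ∈ (univ : Finset (Fin n)).offDiag,
          wpair x y p.1 p.2 * c h p.1 p.2 := by
  have expand : ∀ g : Fin n → Bool, (Tgen c x y h g)^2
      = ∑ p ∈ (univ : Finset (Fin n)).offDiag, ∑ q ∈ (univ : Finset (Fin n)).offDiag,
          (x p.1 * y p.2 * c h p.1 p.2 * (x q.1 * y q.2 * c h q.1 q.2)) *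
          (sgn (g p.1) * sgn (g p.2) * sgn (g q.1) * sgn (g q.2)) := by
    intro g
    rw [sq]
    unfold Tgen
    rw [Finset.sum_mul_sum]
    apply Finset.sum_congr rfl; intro p _
    apply Finset.sum_congr rfl; intro q _
    ring
  rw [Finset.sum_congr rfl (fun g _ => expand g)]
  rw [Finset.sum_comm]
  have step1 : ∀ p ∈ (univ : Finset (Fin n)).offDiag,
      (∑ g : Fin n → Bool, ∑ q ∈ (univ : Finset (Fin n)).offDiag,
          (x p.1 * y p.2 * c h p.1 p.2 * (x q.1 * y q.2 * c h q.1 q.2)) *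
          (sgn (g p.1) * sgn (g p.2) * sgn (g q.1) * sgn (g q.2)))
      = (2:ℝ)^n * (wpair x y p.1 p.2 * c h p.1 p.2) := by
    intro p hp
    have hpne : p.1 ≠ p.2 := (Finset.mem_offDiag.mp hp).2.2
    rw [Finset.sum_comm]
    have inner : ∀ q ∈ (univ : Finset (Fin n)).offDiag,
        (∑ g : Fin n → Bool,
          (x p.1 * y p.2 * c h p.1 p.2 * (x q.1 * y q.2 * c h q.1 q.2)) *
          (sgn (g p.1) * sgn (g p.2) * sgn (g q.1) * sgn (g q.2)))
        = if q = p ∨ q = p.swap then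
            (x p.1 * y p.2 * c h p.1 p.2 * (x q.1 * y q.2 * c h q.1 q.2)) * (2:ℝ)^n
          else 0 := by
      intro q hq
      have hqne : q.1 ≠ q.2 := (Finset.mem_offDiag.mp hq).2.2
      rw [← Finset.mul_sum, g4 hpne hqne]
      have hiff : ((p.1 = q.1 ∧ p.2 = q.2) ∨ (p.1 = q.2 ∧ p.2 = q.1))
          ↔ (q = p ∨ q = p.swap) := by
        constructor
        · rintro (⟨h1, h2⟩ | ⟨h1, h2⟩)
          · exact Or.inl (Prod.ext h1.symm h2.symm)
          · exact Or.inr (Prod.ext h2.symm h1.symm)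
        · rintro (rfl | rfl)
          · exact Or.inl ⟨rfl, rfl⟩
          · exact Or.inr ⟨rfl, rfl⟩
      rw [if_congr hiff rfl rfl]
      split_ifs <;> ring
    rw [Finset.sum_congr rfl inner]
    have hsw : p.swap ≠ p := by
      intro hsp
      exact hpne (congrArg Prod.fst hsp).symm
    have split2 : ∀ q : Fin n × Fin n,
        (if q = p ∨ q = p.swap then
            (x p.1 * y p.2 * c h p.1 p.2 * (x q.1 * y q.2 * c h q.1 q.2)) * (2:ℝ)^n
          else 0)
        = (if q = p then
            (x p.1 * y p.2 * c h p.1 p.2 * (x q.1 * y q.2 * c h q.1 q.2)) * (2:ℝ)^n else 0)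
          + (if q = p.swap then
            (x p.1 * y p.2 * c h p.1 p.2 * (x q.1 * y q.2 * c h q.1 q.2)) * (2:ℝ)^n else 0) := by
      intro q
      by_cases h1 : q = p
      · subst h1
        rw [if_pos (Or.inl rfl), if_pos rfl, if_neg (fun hh => hsw hh.symm), add_zero]
      · by_cases h2 : q = p.swap
        · subst h2
          rw [if_pos (Or.inr rfl), if_neg h1, if_pos rfl, zero_add]
        · rw [if_neg (by tauto), if_neg h1, if_neg h2, add_zero]
    rw [Finset.sum_congr rfl (fun q _ => split2 q), Finset.sum_add_distrib]
    have hpmem : p ∈ (univ : Finset (Fin n)).offDiag := hp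
    have hswmem : p.swap ∈ (univ : Finset (Fin n)).offDiag :=
      Finset.mem_offDiag.mpr ⟨Finset.mem_univ _, Finset.mem_univ _, Ne.symm hpne⟩
    rw [Finset.sum_ite_eq' _ p, Finset.sum_ite_eq' _ p.swap, if_pos hpmem, if_pos hswmem]
    have hi := hidem h p.1 p.2
    have hs := hsymm h p.2 p.1
    simp only [Prod.fst_swap, Prod.snd_swap, wpair]
    rw [hs]
    linear_combination (2:ℝ)^n * (x p.1 * y p.2 * x p.1 * y p.2 + x p.1 * y p.2 * x p.2 * y p.1) * hi
  rw [Finset.sum_congr rfl step1, Finset.mul_sum]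


lemma general_var (c : H → Fin n → Fin n → ℝ)
    (hdiag : ∀ h i, c h i i = 1) (hsymm : ∀ h i j, c h i j = c h j i)
    (hidem : ∀ h i j, c h i j * c h i j = c h i j)
    (hH : 0 < Fintype.card H) (x y : Fin n → ℝ) :
    (∑ h : H, ∑ g : Fin n → Bool, (Sgen c x y h g)^2) / ((Fintype.card H : ℝ) * 2^n)
      - ((∑ h : H, ∑ g : Fin n → Bool, Sgen c x y h g) / ((Fintype.card H : ℝ) * 2^n))^2
    = (∑ p ∈ (univ : Finset (Fin n)).offDiag,
        wpair x y p.1 p.2 * (∑ h : H, c h p.1 p.2)) / (Fintype.card H : ℝ) := by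
  classical
  set D := ∑ i : Fin n, x i * y i with hD
  have cardg : (Fintype.card (Fin n → Bool) : ℝ) = 2^n := by
    rw [Fintype.card_fun]; push_cast; simp
  have hmean : ∀ h : H, ∑ g : Fin n → Bool, Sgen c x y h g = 2^n * D := by
    intro h
    rw [Finset.sum_congr rfl (fun g _ => Sgen_split c hdiag x y h g),
      Finset.sum_add_distrib, Tgen_mean, add_zero, Finset.sum_const, Finset.card_univ,
      nsmul_eq_mul, cardg]
  have hsq : ∀ h : H, ∑ g : Fin n → Bool, (Sgen c x y h g)^2
      = 2^n * D^2 + (2:ℝ)^n * ∑ p ∈ (univ : Finset (Fin n)).offDiag,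
          wpair x y p.1 p.2 * c h p.1 p.2 := by
    intro h
    have : ∀ g : Fin n → Bool, (Sgen c x y h g)^2
        = D^2 + 2 * D * Tgen c x y h g + (Tgen c x y h g)^2 := by
      intro g; rw [Sgen_split c hdiag x y h g]; ring
    rw [Finset.sum_congr rfl (fun g _ => this g), Finset.sum_add_distrib,
      Finset.sum_add_distrib, Finset.sum_const, Finset.card_univ, nsmul_eq_mul, cardg,
      ← Finset.mul_sum, Tgen_mean, mul_zero, add_zero, Tgen_sq c hsymm hidem]
  rw [Finset.sum_congr rfl (fun h _ => hmean h), Finset.sum_congr rfl (fun h _ => hsq h)]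
  rw [Finset.sum_add_distrib, Finset.sum_const, Finset.card_univ, nsmul_eq_mul,
    Finset.sum_const, Finset.card_univ, nsmul_eq_mul, ← Finset.mul_sum]
  rw [Finset.sum_comm]
  have swapc : ∑ p ∈ (univ : Finset (Fin n)).offDiag, ∑ h : H, wpair x y p.1 p.2 * c h p.1 p.2
      = ∑ p ∈ (univ : Finset (Fin n)).offDiag, wpair x y p.1 p.2 * (∑ h : H, c h p.1 p.2) := by
    apply Finset.sum_congr rfl
    intro p _
    rw [Finset.mul_sum]
  rw [swapc]
  have hN : (Fintype.card H : ℝ) ≠ 0 := Nat.cast_ne_zero.mpr hH.ne'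
  have hP : (2:ℝ)^n ≠ 0 := pow_ne_zero _ two_ne_zero
  field_simp
  ring

end General


/-- additive shift cancellation mod m -/
lemma mod_add_cancel {m a r r' : ℕ} (hr : r < m) (hr' : r' < m)
    (h : (a + r) % m = (a + r') % m) : r = r' := by
  have h1 : r ≡ r' [MOD m] := Nat.ModEq.add_left_cancel' a h
  have h2 : r % m = r' % m := h1
  rwa [Nat.mod_eq_of_lt hr, Nat.mod_eq_of_lt hr'] at h2

lemma delta_sum {m : ℕ} (u v : Fin m) :
    ∑ j : Fin m, (if u = j then (1:ℝ) else 0) * (if v = j then 1 else 0)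
      = if u = v then 1 else 0 := by
  by_cases huv : u = v
  · subst huv
    rw [if_pos rfl]
    have h1 : ∀ j : Fin m, (if u = j then (1:ℝ) else 0) * (if u = j then 1 else 0)
        = if j = u then (1:ℝ) else 0 := by
      intro j
      by_cases h : u = j
      · rw [if_pos h, if_pos h.symm]; ring
      · rw [if_neg h, if_neg (Ne.symm h)]; ring
    rw [Finset.sum_congr rfl (fun j _ => h1 j), Finset.sum_ite_eq' _ u, if_pos (Finset.mem_univ u)]
  · rw [if_neg huv]
    apply Finset.sum_eq_zero
    intro j _
    by_cases h1 : u = j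
    · rw [if_pos h1, one_mul, if_neg (fun h2 => huv (h1.trans h2.symm))]
    · rw [if_neg h1, zero_mul]

lemma delta_sum_nat {m : ℕ} {a b : ℕ} (ha : a < m) (hb : b < m) :
    ∑ j : Fin m, (if a = j.1 then (1:ℝ) else 0) * (if b = j.1 then 1 else 0)
      = if a = b then 1 else 0 := by
  have key : ∀ j : Fin m, ((if a = j.1 then (1:ℝ) else 0) * (if b = j.1 then 1 else 0))
      = (if (⟨a, ha⟩ : Fin m) = j then (1:ℝ) else 0) * (if (⟨b, hb⟩ : Fin m) = j then 1 else 0) := by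
    intro j
    congr 1
    · exact if_congr (by rw [Fin.ext_iff]) rfl rfl
    · exact if_congr (by rw [Fin.ext_iff]) rfl rfl
  rw [Finset.sum_congr rfl (fun j _ => key j), delta_sum]
  exact if_congr (by rw [Fin.ext_iff]) rfl rfl

lemma shift_count {m : ℕ} (hm : 0 < m) (r t : ℕ) (ht : t < m) :
    ∑ u : Fin m, (if (u.1 + r) % m = t then (1:ℝ) else 0) = 1 := by
  have hinj : Function.Injective
      (fun u : Fin m => (⟨(u.1 + r) % m, Nat.mod_lt _ hm⟩ : Fin m)) := by
    intro u v huv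
    have h1 : (u.1 + r) % m = (v.1 + r) % m := by
      have := congrArg Fin.val huv
      simpa using this
    have h2 : (r + u.1) % m = (r + v.1) % m := by
      rw [Nat.add_comm r u.1, Nat.add_comm r v.1]; exact h1
    exact Fin.ext (mod_add_cancel u.isLt v.isLt h2)
  have hbij : Function.Bijective
      (fun u : Fin m => (⟨(u.1 + r) % m, Nat.mod_lt _ hm⟩ : Fin m)) :=
    Finite.injective_iff_bijective.mp hinj
  let e := Equiv.ofBijective _ hbij
  have step : ∑ u : Fin m, (if (u.1 + r) % m = t then (1:ℝ) else 0)
      = ∑ u : Fin m, (fun w : Fin m => if w.1 = t then (1:ℝ) else 0) (e u) := rfl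
  rw [step, Equiv.sum_comp e (fun w : Fin m => if w.1 = t then (1:ℝ) else 0)]
  have key : ∀ w : Fin m, (if w.1 = t then (1:ℝ) else 0) = if w = ⟨t, ht⟩ then 1 else 0 := by
    intro w; exact if_congr (by rw [Fin.ext_iff]) rfl rfl
  rw [Finset.sum_congr rfl (fun w _ => key w), Finset.sum_ite_eq' _ _,
    if_pos (Finset.mem_univ _)]

/-! ### Counting lemmas -/

lemma count_pairs {m : ℕ} : (∑ u : Fin m, ∑ v : Fin m, if u = v then (1:ℝ) else 0) = m := by
  have inner : ∀ u : Fin m, (∑ v : Fin m, if u = v then (1:ℝ) else 0) = 1 := by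
    intro u
    rw [Finset.sum_ite_eq _ u, if_pos (Finset.mem_univ u)]
  rw [Finset.sum_congr rfl (fun u _ => inner u), Finset.sum_const, Finset.card_univ,
    Fintype.card_fin, nsmul_eq_mul, mul_one]

lemma c1_count {n' m : ℕ} (hm : 0 < m) {i i' : Fin n'} (hne : i ≠ i') :
    ∑ h : Fin n' → Fin m, (if h i = h i' then (1:ℝ) else 0) = (m:ℝ)^n' / m := by
  rw [sum_fun_pair i i' hne (fun u v => if u = v then (1:ℝ) else 0)]
  rw [count_pairs, Fintype.card_fin, Fintype.card_fin]
  have h2 : 2 ≤ n' := by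
    have h1 := i.isLt; have h2 := i'.isLt
    have h3 : i.1 ≠ i'.1 := fun h => hne (Fin.ext h)
    omega
  have hm' : (m:ℝ) ≠ 0 := Nat.cast_ne_zero.mpr hm.ne'
  rw [eq_div_iff hm']
  rw [← pow_succ, ← pow_succ]
  congr 1
  omega

lemma cZ_same {n m Z : ℕ} (hZ : 0 < Z) (hZm : Z ≤ m) (hdvd : Z ∣ n)
    {i i' : Fin n} (hne : i ≠ i') (hblk : i.1 / Z = i'.1 / Z) (h : Fin (n/Z) → Fin m) :
    idx n m Z hdvd h i ≠ idx n m Z hdvd h i' := by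
  intro heq
  unfold idx at heq
  have hbfin : (⟨i.1 / Z, blockLt hdvd i⟩ : Fin (n/Z)) = ⟨i'.1 / Z, blockLt hdvd i'⟩ :=
    Fin.ext hblk
  rw [hbfin] at heq
  have hmod : i.1 % Z = i'.1 % Z :=
    mod_add_cancel (lt_of_lt_of_le (Nat.mod_lt _ hZ) hZm)
      (lt_of_lt_of_le (Nat.mod_lt _ hZ) hZm) heq
  apply hne
  apply Fin.ext
  calc i.1 = Z * (i.1 / Z) + i.1 % Z := (Nat.div_add_mod _ _).symm
    _ = Z * (i'.1 / Z) + i'.1 % Z := by rw [hblk, hmod]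
    _ = i'.1 := Nat.div_add_mod _ _

lemma cZ_diff {n m Z : ℕ} (hm : 0 < m) (hdvd : Z ∣ n) {i i' : Fin n}
    (hblk : i.1 / Z ≠ i'.1 / Z) :
    ∑ h : Fin (n/Z) → Fin m,
        (if idx n m Z hdvd h i = idx n m Z hdvd h i' then (1:ℝ) else 0)
      = (m:ℝ)^(n/Z) / m := by
  set b1 : Fin (n/Z) := ⟨i.1 / Z, blockLt hdvd i⟩ with hb1
  set b2 : Fin (n/Z) := ⟨i'.1 / Z, blockLt hdvd i'⟩ with hb2
  have hb : b1 ≠ b2 := fun hh => hblk (congrArg Fin.val hh)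
  have key : ∀ h : Fin (n/Z) → Fin m,
      (if idx n m Z hdvd h i = idx n m Z hdvd h i' then (1:ℝ) else 0)
        = (fun u v : Fin m =>
            if (u.1 + i.1 % Z) % m = (v.1 + i'.1 % Z) % m then (1:ℝ) else 0) (h b1) (h b2) :=
    fun h => rfl
  have hpair := sum_fun_pair (B := Fin m) b1 b2 hb
    (fun u v => if (u.1 + i.1 % Z) % m = (v.1 + i'.1 % Z) % m then (1:ℝ) else 0)
  rw [Finset.sum_congr rfl (fun h _ => key h), hpair]
  rw [Finset.sum_comm]
  have inner : ∀ v : Fin m,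
      (∑ u : Fin m, if (u.1 + i.1 % Z) % m = (v.1 + i'.1 % Z) % m then (1:ℝ) else 0) = 1 :=
    fun v => shift_count hm _ _ (Nat.mod_lt _ hm)
  rw [Finset.sum_congr rfl (fun v _ => inner v), Finset.sum_const, Finset.card_univ,
    Fintype.card_fin, Fintype.card_fin, nsmul_eq_mul, mul_one]
  have h2 : 2 ≤ n / Z := by
    have h1 := blockLt hdvd i; have h2' := blockLt hdvd i'
    omega
  have hm' : (m:ℝ) ≠ 0 := Nat.cast_ne_zero.mpr hm.ne'
  rw [eq_div_iff hm']
  rw [← pow_succ, ← pow_succ]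
  congr 1
  omega

/-! ### Estimators as `Sgen` -/

lemma est1_eq (n' m : ℕ) (x y : Fin n' → ℝ) (ω : (Fin n' → Fin m) × (Fin n' → Bool)) :
    est1 n' m x y ω
      = Sgen (fun h i i' => if h i = h i' then (1:ℝ) else 0) x y ω.1 ω.2 := by
  unfold est1 Sgen
  rw [Finset.sum_congr rfl (fun j _ => Finset.sum_mul_sum univ univ _ _)]
  rw [Finset.sum_comm]
  apply Finset.sum_congr rfl; intro i _
  rw [Finset.sum_comm]
  apply Finset.sum_congr rfl; intro i' _
  have step : ∀ j : Fin m,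
      (x i * sgn (ω.2 i) * (if ω.1 i = j then (1:ℝ) else 0)) *
        (y i' * sgn (ω.2 i') * (if ω.1 i' = j then 1 else 0))
      = (x i * y i' * sgn (ω.2 i) * sgn (ω.2 i')) *
          ((if ω.1 i = j then (1:ℝ) else 0) * (if ω.1 i' = j then 1 else 0)) := by
    intro j; ring
  rw [Finset.sum_congr rfl (fun j _ => step j), ← Finset.mul_sum, delta_sum]

lemma est_eq (n m Z : ℕ) (hm : 0 < m) (hdvd : Z ∣ n) (x y : Fin n → ℝ)
    (ω : (Fin (n / Z) → Fin m) × (Fin n → Bool)) :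
    est n m Z hdvd x y ω
      = Sgen (fun h i i' =>
          if idx n m Z hdvd h i = idx n m Z hdvd h i' then (1:ℝ) else 0) x y ω.1 ω.2 := by
  unfold est Sgen
  rw [Finset.sum_congr rfl (fun j _ => Finset.sum_mul_sum univ univ _ _)]
  rw [Finset.sum_comm]
  apply Finset.sum_congr rfl; intro i _
  rw [Finset.sum_comm]
  apply Finset.sum_congr rfl; intro i' _
  have step : ∀ j : Fin m,
      (x i * sgn (ω.2 i) * (if idx n m Z hdvd ω.1 i = j.1 then (1:ℝ) else 0)) *
        (y i' * sgn (ω.2 i') * (if idx n m Z hdvd ω.1 i' = j.1 then 1 else 0))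
      = (x i * y i' * sgn (ω.2 i) * sgn (ω.2 i')) *
          ((if idx n m Z hdvd ω.1 i = j.1 then (1:ℝ) else 0) *
            (if idx n m Z hdvd ω.1 i' = j.1 then 1 else 0)) := by
    intro j; ring
  have ha : idx n m Z hdvd ω.1 i < m := by unfold idx; exact Nat.mod_lt _ hm
  have hb : idx n m Z hdvd ω.1 i' < m := by unfold idx; exact Nat.mod_lt _ hm
  rw [Finset.sum_congr rfl (fun j _ => step j), ← Finset.mul_sum, delta_sum_nat ha hb]

/-! ### Closed forms for the variances -/

lemma var1_eq (n' m : ℕ) (hm : 0 < m) (x y : Fin n' → ℝ) :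
    var1 n' m x y
      = (∑ p ∈ (univ : Finset (Fin n')).offDiag, wpair x y p.1 p.2) / m := by
  classical
  set c : (Fin n' → Fin m) → Fin n' → Fin n' → ℝ :=
    fun h i i' => if h i = h i' then (1:ℝ) else 0 with hc
  have hdiag : ∀ h i, c h i i = 1 := fun h i => if_pos rfl
  have hsymm : ∀ h i j, c h i j = c h j i := fun h i j => if_congr eq_comm rfl rfl
  have hidem : ∀ h i j, c h i j * c h i j = c h i j := by
    intro h i j
    have hrfl : c h i j = if h i = h j then (1:ℝ) else 0 := rfl
    rw [hrfl]; split_ifs <;> ring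
  have hH : 0 < Fintype.card (Fin n' → Fin m) := by
    rw [Fintype.card_fun, Fintype.card_fin, Fintype.card_fin]
    exact pow_pos hm _
  have hcard : (Fintype.card (Fin n' → Fin m) : ℝ) = (m:ℝ)^n' := by
    rw [Fintype.card_fun, Fintype.card_fin, Fintype.card_fin]; push_cast; ring
  have hexp : ∀ f : ((Fin n' → Fin m) × (Fin n' → Bool)) → ℝ,
      expec1 n' m f = (∑ h : Fin n' → Fin m, ∑ g : Fin n' → Bool, f (h, g))
        / ((Fintype.card (Fin n' → Fin m) : ℝ) * 2^n') := by
    intro f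
    unfold expec1
    rw [Fintype.sum_prod_type]
    congr 1
    rw [Fintype.card_prod]
    push_cast
    congr 1
    rw [Fintype.card_fun, Fintype.card_bool, Fintype.card_fin]
    push_cast; ring
  unfold var1
  rw [hexp, hexp]
  have he1 : ∀ (h : Fin n' → Fin m) (g : Fin n' → Bool),
      est1 n' m x y (h, g) = Sgen c x y h g := fun h g => est1_eq n' m x y (h, g)
  simp only [he1]
  rw [general_var c hdiag hsymm hidem hH x y]
  have hcnt : ∀ p ∈ (univ : Finset (Fin n')).offDiag,
      wpair x y p.1 p.2 * (∑ h : Fin n' → Fin m, c h p.1 p.2)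
        = wpair x y p.1 p.2 * ((m:ℝ)^n' / m) := by
    intro p hp
    rw [c1_count hm (Finset.mem_offDiag.mp hp).2.2]
  rw [Finset.sum_congr rfl hcnt, ← Finset.sum_mul, hcard]
  have hm' : (m:ℝ) ≠ 0 := Nat.cast_ne_zero.mpr hm.ne'
  have hmn' : (m:ℝ)^n' ≠ 0 := pow_ne_zero _ hm'
  field_simp

lemma varZ_eq (n m Z : ℕ) (hm : 0 < m) (hZ : 0 < Z) (hZm : Z ≤ m) (hdvd : Z ∣ n)
    (x y : Fin n → ℝ) :
    varZ n m Z hdvd x y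
      = (∑ p ∈ (univ : Finset (Fin n)).offDiag,
          if p.1.1 / Z = p.2.1 / Z then 0 else wpair x y p.1 p.2) / m := by
  classical
  set c : (Fin (n/Z) → Fin m) → Fin n → Fin n → ℝ :=
    fun h i i' => if idx n m Z hdvd h i = idx n m Z hdvd h i' then (1:ℝ) else 0 with hc
  have hdiag : ∀ h i, c h i i = 1 := fun h i => if_pos rfl
  have hsymm : ∀ h i j, c h i j = c h j i := fun h i j => if_congr eq_comm rfl rfl
  have hidem : ∀ h i j, c h i j * c h i j = c h i j := by
    intro h i j
    have hrfl : c h i j = if idx n m Z hdvd h i = idx n m Z hdvd h j then (1:ℝ) else 0 := rfl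
    rw [hrfl]; split_ifs <;> ring
  have hH : 0 < Fintype.card (Fin (n/Z) → Fin m) := by
    rw [Fintype.card_fun, Fintype.card_fin, Fintype.card_fin]
    exact pow_pos hm _
  have hcard : (Fintype.card (Fin (n/Z) → Fin m) : ℝ) = (m:ℝ)^(n/Z) := by
    rw [Fintype.card_fun, Fintype.card_fin, Fintype.card_fin]; push_cast; ring
  have hexp : ∀ f : ((Fin (n/Z) → Fin m) × (Fin n → Bool)) → ℝ,
      expec n m Z f = (∑ h : Fin (n/Z) → Fin m, ∑ g : Fin n → Bool, f (h, g))
        / ((Fintype.card (Fin (n/Z) → Fin m) : ℝ) * 2^n) := by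
    intro f
    unfold expec
    rw [Fintype.sum_prod_type]
    congr 1
    rw [Fintype.card_prod]
    push_cast
    congr 1
    rw [Fintype.card_fun, Fintype.card_bool, Fintype.card_fin]
    push_cast; ring
  unfold varZ
  rw [hexp, hexp]
  have he1 : ∀ (h : Fin (n/Z) → Fin m) (g : Fin n → Bool),
      est n m Z hdvd x y (h, g) = Sgen c x y h g := fun h g => est_eq n m Z hm hdvd x y (h, g)
  simp only [he1]
  rw [general_var c hdiag hsymm hidem hH x y]
  have hcnt : ∀ p ∈ (univ : Finset (Fin n)).offDiag,
      wpair x y p.1 p.2 * (∑ h : Fin (n/Z) → Fin m, c h p.1 p.2)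
        = (if p.1.1 / Z = p.2.1 / Z then 0 else wpair x y p.1 p.2) * ((m:ℝ)^(n/Z) / m) := by
    intro p hp
    have hne : p.1 ≠ p.2 := (Finset.mem_offDiag.mp hp).2.2
    by_cases hblk : p.1.1 / Z = p.2.1 / Z
    · rw [if_pos hblk]
      have hz : ∀ h : Fin (n/Z) → Fin m, c h p.1 p.2 = 0 := by
        intro h
        exact if_neg (cZ_same hZ hZm hdvd hne hblk h)
      rw [Finset.sum_congr rfl (fun h _ => hz h), Finset.sum_const, smul_zero, mul_zero,
        zero_mul]
    · rw [if_neg hblk, cZ_diff hm hdvd hblk]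
  rw [Finset.sum_congr rfl hcnt, ← Finset.sum_mul, hcard]
  have hm' : (m:ℝ) ≠ 0 := Nat.cast_ne_zero.mpr hm.ne'
  have hmn' : (m:ℝ)^(n/Z) ≠ 0 := pow_ne_zero _ hm'
  field_simp

/-! ### Reindexing same-block pairs -/

def embIdx {n Z : ℕ} (hdvd : Z ∣ n) (b : Fin (n / Z)) (k : Fin Z) : Fin n :=
  ⟨Z * b.1 + k.1, by
    have h1 : Z * b.1 + k.1 < Z * (n / Z) := by
      have hk := k.isLt
      have hb := b.isLt
      nlinarith
    rwa [Nat.mul_div_cancel' hdvd] at h1⟩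

set_option maxHeartbeats 1000000 in
lemma reindex (n Z : ℕ) (hZ : 0 < Z) (hdvd : Z ∣ n) (f : Fin n → Fin n → ℝ) :
    ∑ p ∈ ((univ : Finset (Fin n)).offDiag).filter (fun p => p.1.1 / Z = p.2.1 / Z),
        f p.1 p.2
      = ∑ b : Fin (n / Z), ∑ q ∈ (univ : Finset (Fin Z)).offDiag,
          f (embIdx hdvd b q.1) (embIdx hdvd b q.2) := by
  classical
  rw [show (∑ b : Fin (n / Z), ∑ q ∈ (univ : Finset (Fin Z)).offDiag,
        f (embIdx hdvd b q.1) (embIdx hdvd b q.2))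
      = ∑ r ∈ (univ : Finset (Fin (n / Z))) ×ˢ (univ : Finset (Fin Z)).offDiag,
          f (embIdx hdvd r.1 r.2.1) (embIdx hdvd r.1 r.2.2) from
    (Finset.sum_product (univ : Finset (Fin (n / Z))) ((univ : Finset (Fin Z)).offDiag)
      (fun r => f (embIdx hdvd r.1 r.2.1) (embIdx hdvd r.1 r.2.2))).symm]
  apply Finset.sum_nbij'
    (i := fun p => ((⟨p.1.1 / Z, blockLt hdvd p.1⟩ : Fin (n / Z)),
      ((⟨p.1.1 % Z, Nat.mod_lt _ hZ⟩ : Fin Z), (⟨p.2.1 % Z, Nat.mod_lt _ hZ⟩ : Fin Z))))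
    (j := fun r => (embIdx hdvd r.1 r.2.1, embIdx hdvd r.1 r.2.2))
  · intro p hp
    rcases Finset.mem_filter.mp hp with ⟨hpo, hblk⟩
    have hne : p.1 ≠ p.2 := (Finset.mem_offDiag.mp hpo).2.2
    apply Finset.mem_product.mpr
    refine ⟨Finset.mem_univ _, Finset.mem_offDiag.mpr ⟨Finset.mem_univ _, Finset.mem_univ _, ?_⟩⟩
    intro hk
    have hmod : p.1.1 % Z = p.2.1 % Z := congrArg Fin.val hk
    apply hne
    apply Fin.ext
    calc p.1.1 = Z * (p.1.1 / Z) + p.1.1 % Z := (Nat.div_add_mod _ _).symm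
      _ = Z * (p.2.1 / Z) + p.2.1 % Z := by rw [hblk, hmod]
      _ = p.2.1 := Nat.div_add_mod _ _
  · intro r hr
    rcases Finset.mem_product.mp hr with ⟨_, hq⟩
    have hk : r.2.1 ≠ r.2.2 := (Finset.mem_offDiag.mp hq).2.2
    apply Finset.mem_filter.mpr
    constructor
    · apply Finset.mem_offDiag.mpr
      refine ⟨Finset.mem_univ _, Finset.mem_univ _, ?_⟩
      intro he
      apply hk
      apply Fin.ext
      have := congrArg Fin.val he
      simpa [embIdx] using this
    · show (embIdx hdvd r.1 r.2.1).1 / Z = (embIdx hdvd r.1 r.2.2).1 / Z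
      have e1 : (embIdx hdvd r.1 r.2.1).1 / Z = r.1.1 := by
        show (Z * r.1.1 + r.2.1.1) / Z = r.1.1
        rw [Nat.mul_add_div hZ, Nat.div_eq_of_lt r.2.1.isLt, add_zero]
      have e2 : (embIdx hdvd r.1 r.2.2).1 / Z = r.1.1 := by
        show (Z * r.1.1 + r.2.2.1) / Z = r.1.1
        rw [Nat.mul_add_div hZ, Nat.div_eq_of_lt r.2.2.isLt, add_zero]
      rw [e1, e2]
  · intro p hp
    rcases Finset.mem_filter.mp hp with ⟨_, hblk⟩
    apply Prod.ext
    · apply Fin.ext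
      show Z * (p.1.1 / Z) + p.1.1 % Z = p.1.1
      exact Nat.div_add_mod _ _
    · apply Fin.ext
      show Z * (p.1.1 / Z) + p.2.1 % Z = p.2.1
      rw [hblk]
      exact Nat.div_add_mod _ _
  · intro r hr
    apply Prod.ext
    · apply Fin.ext
      show (Z * r.1.1 + r.2.1.1) / Z = r.1.1
      rw [Nat.mul_add_div hZ, Nat.div_eq_of_lt r.2.1.isLt, add_zero]
    · apply Prod.ext
      · apply Fin.ext
        show (Z * r.1.1 + r.2.1.1) % Z = r.2.1.1
        rw [Nat.mul_add_mod, Nat.mod_eq_of_lt r.2.1.isLt]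
      · apply Fin.ext
        show (Z * r.1.1 + r.2.2.1) % Z = r.2.2.1
        rw [Nat.mul_add_mod, Nat.mod_eq_of_lt r.2.2.isLt]
  · intro p hp
    rcases Finset.mem_filter.mp hp with ⟨_, hblk⟩
    have e1 : embIdx hdvd (⟨p.1.1 / Z, blockLt hdvd p.1⟩ : Fin (n / Z))
        (⟨p.1.1 % Z, Nat.mod_lt _ hZ⟩ : Fin Z) = p.1 := by
      apply Fin.ext
      exact Nat.div_add_mod _ _
    have e2 : embIdx hdvd (⟨p.1.1 / Z, blockLt hdvd p.1⟩ : Fin (n / Z))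
        (⟨p.2.1 % Z, Nat.mod_lt _ hZ⟩ : Fin Z) = p.2 := by
      apply Fin.ext
      show Z * (p.1.1 / Z) + p.2.1 % Z = p.2.1
      rw [hblk]
      exact Nat.div_add_mod _ _
    rw [e1, e2]


/-- Variance decomposition:
`V_Z(x,y,n,m) = V_1(x,y,n,m) − Σ_{b=0}^{n/Z−1} V_1(x[Zb:Z(b+1)], y[Zb:Z(b+1)], Z, m)`. -/
theorem robe_variance_decomposition (n m Z : ℕ) (hn : 0 < n) (hm : 0 < m) (hZ : 0 < Z)
    (hdvd : Z ∣ n) (hZm : Z ≤ m) (hmn : m ≤ n) (x y : Fin n → ℝ) :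
    varZ n m Z hdvd x y =
      var1 n m x y -
        ∑ b : Fin (n / Z),
          var1 Z m (vecSlice n Z hdvd x b) (vecSlice n Z hdvd y b) := by
  have hslice : ∀ b : Fin (n / Z),
      var1 Z m (vecSlice n Z hdvd x b) (vecSlice n Z hdvd y b)
        = (∑ q ∈ (univ : Finset (Fin Z)).offDiag,
            wpair x y (embIdx hdvd b q.1) (embIdx hdvd b q.2)) / m := by
    intro b
    rw [var1_eq Z m hm]
    rfl
  rw [varZ_eq n m Z hm hZ hZm hdvd x y, var1_eq n m hm x y,
    Finset.sum_congr rfl (fun b _ => hslice b), ← Finset.sum_div,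
    ← reindex n Z hZ hdvd (wpair x y), ← sub_div]
  congr 1
  rw [Finset.sum_filter]
  have pt : ∀ p : Fin n × Fin n,
      (if p.1.1 / Z = p.2.1 / Z then (0:ℝ) else wpair x y p.1 p.2)
        = wpair x y p.1 p.2 - (if p.1.1 / Z = p.2.1 / Z then wpair x y p.1 p.2 else 0) := by
    intro p; split_ifs <;> ring
  rw [Finset.sum_congr rfl (fun p _ => pt p), Finset.sum_sub_distrib]
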